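/- If L₀ h(θ) ξ″(r) + ξ(r) h″(θ) = 0 at every point of the domain, then the Weyl conformal curvature tensor C of the charged-Nariai-type metric vanishes identically. -/
import Mathlib


noncomputable section

open Real

/-- Partial derivative of `f` in the `i`-th coordinate direction at the point `x`. -/
def pd (i : Fin 4) (f : (Fin 4 → ℝ) → ℝ) (x : Fin 4 → ℝ) : ℝ :=
  deriv (fun s => f (Function.update x i s)) (x i)

/-- The charged-Nariai-type metric: coordinates `x 0 = t`, `x 1 = r`, `x 2 = θ`, `x 3 = φ`;
nonzero components `g₁₁ = -(r₀²/L₀) ξ(r)²`, `g₂₂ = r₀²/L₀`, `g₃₃ = r₀²`, `g₄₄ = r₀² h(θ)²`. -/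
def gT (r0 L0 : ℝ) (ξ h : ℝ → ℝ) (x : Fin 4 → ℝ) : Fin 4 → Fin 4 → ℝ := fun p q =>
  if p = 0 ∧ q = 0 then -(r0 ^ 2 / L0) * ξ (x 1) ^ 2
  else if p = 1 ∧ q = 1 then r0 ^ 2 / L0
  else if p = 2 ∧ q = 2 then r0 ^ 2
  else if p = 3 ∧ q = 3 then r0 ^ 2 * h (x 2) ^ 2
  else 0

/-- Inverse of a diagonal metric. -/
def ginv (g : (Fin 4 → ℝ) → Fin 4 → Fin 4 → ℝ) (x : Fin 4 → ℝ) : Fin 4 → Fin 4 → ℝ :=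
  fun p q => if p = q then (g x p p)⁻¹ else 0

/-- Christoffel symbols `Γ^a_{bc}` of the Levi-Civita connection of a diagonal metric. -/
def Chr (g : (Fin 4 → ℝ) → Fin 4 → Fin 4 → ℝ) (x : Fin 4 → ℝ) (a b c : Fin 4) : ℝ :=
  (1 / 2) * ∑ d : Fin 4, ginv g x a d *
    (pd b (fun y => g y d c) x + pd c (fun y => g y d b) x - pd d (fun y => g y b c) x)

/-- Covariant derivative `∇_a T_{pq}` of a (0,2)-tensor field. -/
def covDeriv2 (g T : (Fin 4 → ℝ) → Fin 4 → Fin 4 → ℝ) (x : Fin 4 → ℝ) (a p q : Fin 4) : ℝ :=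
  pd a (fun y => T y p q) x
    - ∑ e : Fin 4, Chr g x e a p * T x e q
    - ∑ e : Fin 4, Chr g x e a q * T x p e

/-- Covariant derivative `∇_a T_{pqrs}` of a (0,4)-tensor field. -/
def covDeriv4 (g : (Fin 4 → ℝ) → Fin 4 → Fin 4 → ℝ)
    (T : (Fin 4 → ℝ) → Fin 4 → Fin 4 → Fin 4 → Fin 4 → ℝ)
    (x : Fin 4 → ℝ) (a p q r s : Fin 4) : ℝ :=
  pd a (fun y => T y p q r s) x
    - ∑ e : Fin 4, Chr g x e a p * T x e q r s
    - ∑ e : Fin 4, Chr g x e a q * T x p e r s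
    - ∑ e : Fin 4, Chr g x e a r * T x p q e s
    - ∑ e : Fin 4, Chr g x e a s * T x p q r e

/-- Elementary (0,4)-tensor with the usual Riemann symmetries, supported on the
coordinate plane `(a,b)` and normalized so that its `(a,b,a,b)` component is `1`. -/
def blk (a b : Fin 4) (p q r s : Fin 4) : ℝ :=
  (if p = a ∧ q = b then (1 : ℝ) else if p = b ∧ q = a then -1 else 0) *
  (if r = a ∧ s = b then (1 : ℝ) else if r = b ∧ s = a then -1 else 0)

/-- The (0,4) Riemann curvature tensor of the charged-Nariai-type metric:
`R₁₂₁₂ = -(r₀²/L₀) ξ ξ″`, `R₃₄₃₄ = r₀² h h″` (up to the Riemann symmetries). -/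
def RT (r0 L0 : ℝ) (ξ h : ℝ → ℝ) (x : Fin 4 → ℝ) (p q r s : Fin 4) : ℝ :=
  (-(r0 ^ 2 / L0) * ξ (x 1) * deriv (deriv ξ) (x 1)) * blk 0 1 p q r s
    + (r0 ^ 2 * h (x 2) * deriv (deriv h) (x 2)) * blk 2 3 p q r s

/-- The Ricci tensor of the charged-Nariai-type metric:
`S₁₁ = -ξξ″`, `S₂₂ = ξ″/ξ`, `S₃₃ = h″/h`, `S₄₄ = hh″`. -/
def SRicT (ξ h : ℝ → ℝ) (x : Fin 4 → ℝ) : Fin 4 → Fin 4 → ℝ := fun p q =>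
  if p = 0 ∧ q = 0 then -(ξ (x 1) * deriv (deriv ξ) (x 1))
  else if p = 1 ∧ q = 1 then deriv (deriv ξ) (x 1) / ξ (x 1)
  else if p = 2 ∧ q = 2 then deriv (deriv h) (x 2) / h (x 2)
  else if p = 3 ∧ q = 3 then h (x 2) * deriv (deriv h) (x 2)
  else 0

/-- The scalar curvature of the charged-Nariai-type metric:
`κ = 2(L₀hξ″ + ξh″)/(r₀²ξh)`. -/
def κT (r0 L0 : ℝ) (ξ h : ℝ → ℝ) (x : Fin 4 → ℝ) : ℝ :=
  2 * (L0 * h (x 2) * deriv (deriv ξ) (x 1) + ξ (x 1) * deriv (deriv h) (x 2)) /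
    (r0 ^ 2 * ξ (x 1) * h (x 2))

/-- Kulkarni–Nomizu product of two symmetric (0,2)-tensors. -/
def KN (E A : Fin 4 → Fin 4 → ℝ) (p q r s : Fin 4) : ℝ :=
  E p s * A q r - E p r * A q s + E q r * A p s - E q s * A p r

/-- The (0,4) Weyl conformal curvature tensor of the charged-Nariai-type metric. -/
def CT (r0 L0 : ℝ) (ξ h : ℝ → ℝ) (x : Fin 4 → ℝ) (p q r s : Fin 4) : ℝ :=
  RT r0 L0 ξ h x p q r s
    + (1 / 2) * (gT r0 L0 ξ h x p s * SRicT ξ h x q r - gT r0 L0 ξ h x q s * SRicT ξ h x p r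
        + SRicT ξ h x p s * gT r0 L0 ξ h x q r - SRicT ξ h x q s * gT r0 L0 ξ h x p r)
    - (κT r0 L0 ξ h x / 6) * (gT r0 L0 ξ h x p s * gT r0 L0 ξ h x q r
        - gT r0 L0 ξ h x q s * gT r0 L0 ξ h x p r)

/-- The (0,4) projective curvature tensor of the charged-Nariai-type metric (n = 4). -/
def PT (r0 L0 : ℝ) (ξ h : ℝ → ℝ) (x : Fin 4 → ℝ) (p q r s : Fin 4) : ℝ :=
  RT r0 L0 ξ h x p q r s
    + (1 / 3) * (gT r0 L0 ξ h x p s * SRicT ξ h x q r - gT r0 L0 ξ h x q s * SRicT ξ h x p r)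

/-- The (0,6)-tensor `(U·T)_{pqrs,uv}` built from two (0,4)-tensor fields. -/
def dot4 (g : (Fin 4 → ℝ) → Fin 4 → Fin 4 → ℝ)
    (U T : (Fin 4 → ℝ) → Fin 4 → Fin 4 → Fin 4 → Fin 4 → ℝ)
    (x : Fin 4 → ℝ) (p q r s u v : Fin 4) : ℝ :=
  - ∑ α : Fin 4, ∑ β : Fin 4, ginv g x α β *
      (U x u v p β * T x α q r s + U x u v q β * T x p α r s
        + U x u v r β * T x p q α s + U x u v s β * T x p q r α)

/-- The Tachibana tensor `Q(Z,T)_{pqrs,uv}`. -/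
def Qop (Z : Fin 4 → Fin 4 → ℝ) (T : Fin 4 → Fin 4 → Fin 4 → Fin 4 → ℝ)
    (p q r s u v : Fin 4) : ℝ :=
  Z v p * T u q r s + Z v q * T p u r s + Z v r * T p q u s + Z v s * T p q r u
    - Z u p * T v q r s - Z u q * T p v r s - Z u r * T p q v s - Z u s * T p q r v

/-- The Ricci operator `S^t_p = g^{tα} S_{αp}` of a metric `g` with Ricci tensor `S`. -/
def Sop (g S : (Fin 4 → ℝ) → Fin 4 → Fin 4 → ℝ) (x : Fin 4 → ℝ) (t p : Fin 4) : ℝ :=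
  ∑ a : Fin 4, ginv g x t a * S x a p

/-- `ω(f) = f′f″ - ff‴`. -/
def omg (f : ℝ → ℝ) (t : ℝ) : ℝ :=
  deriv f t * deriv (deriv f) t - f t * deriv (deriv (deriv f)) t

/-- `Ω = L₀hξ″ - ξh″`. -/
def ΩT (L0 : ℝ) (ξ h : ℝ → ℝ) (x : Fin 4 → ℝ) : ℝ :=
  L0 * h (x 2) * deriv (deriv ξ) (x 1) - ξ (x 1) * deriv (deriv h) (x 2)

set_option maxHeartbeats 12000000 in
/-- If `L₀ h(θ) ξ″(r) + ξ(r) h″(θ) = 0` at every point, then the Weyl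
conformal curvature tensor of the charged-Nariai-type metric vanishes identically. -/
theorem cnt_conformally_flat (r0 L0 : ℝ) (ξ h : ℝ → ℝ)
    (hr0 : 0 < r0) (hL0 : 0 < L0) (hL1 : L0 ≤ 1)
    (hξ : ContDiff ℝ (⊤ : ℕ∞) ξ) (hξ0 : ∀ t : ℝ, ξ t ≠ 0)
    (hh : ContDiff ℝ (⊤ : ℕ∞) h) (hh0 : ∀ t : ℝ, h t ≠ 0)
    (hcond : ∀ r θ : ℝ, L0 * h θ * deriv (deriv ξ) r + ξ r * deriv (deriv h) θ = 0) :
    ∀ (x : Fin 4 → ℝ) (p q r s : Fin 4), CT r0 L0 ξ h x p q r s = 0 := by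
  intro x p q r s
  have hA := hξ0 (x 1)
  have hB := hh0 (x 2)
  have hr : r0 ≠ 0 := hr0.ne'
  have hL : L0 ≠ 0 := hL0.ne'
  have hB2 : deriv (deriv h) (x 2) = -(L0 * h (x 2) * deriv (deriv ξ) (x 1)) / ξ (x 1) := by
    field_simp
    linarith [hcond (x 1) (x 2)]
  fin_cases p <;> fin_cases q <;> fin_cases r <;> fin_cases s <;>
    simp [CT, RT, SRicT, gT, κT, blk, hB2] <;> field_simp <;> ring
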